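/- arXiv:1506.06486 — 4 statements merged into one kernel-verified Lean document; each statement's English description precedes it below -/
import Mathlib

section
/- Let λ ∈ ℂ with λ ≠ 0, and suppose the pair (u, ω) in H₀²(D) × L²(D) satisfies: (i) for all v ∈ H₀²(D), ((n−1)⁻¹ Δu, Δv)₀ = −λ((n−1)⁻¹ u, Δv)₀ − λ(Δu, n(n−1)⁻¹ v)₀ − λ(n(n−1)⁻¹ ω, v)₀, and (ii) (ω, z)₀ = λ(u, z)₀ for all z ∈ L²(D). Then ω = λu in L²(D) and u satisfies the quadratic eigenvalue equation ((n−1)⁻¹(Δu + λu), Δv + conj(λ) n v)₀ = 0 for all v ∈ H₀²(D). Conversely, if u ∈ H₀²(D) satisfies the quadratic equation and ω := λu, then (u, ω) satisfies (i)–(ii). -/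
open scoped ComplexInnerProductSpace ComplexConjugate

/-- Equivalence of the linearized transmission eigenvalue problem and the quadratic
formulation.  Here `V` plays the role of `H₀²(D)`, `W` of `L²(D)`, `J : V → W` is the
inclusion, `Dl` the Laplacian, `R` multiplication by `(n-1)⁻¹`, `N` multiplication by `n`
and `Q` multiplication by `n (n-1)⁻¹`.  The paper pairing `(f, g)₀` is `⟪g, f⟫`. -/
theorem stmt4 {V W : Type*} [NormedAddCommGroup V] [InnerProductSpace ℂ V] [CompleteSpace V]
    [NormedAddCommGroup W] [InnerProductSpace ℂ W] [CompleteSpace W]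
    (J Dl : V →L[ℂ] W) (R N Q : W →L[ℂ] W)
    (hR : IsSelfAdjoint R) (hN : IsSelfAdjoint N)
    (hQ : Q = N ∘L R)
    (hRN : ∀ x y : W, ⟪N y, R x⟫ = ⟪Q y, x⟫)
    (hRN' : ∀ x y : W, ⟪N y, R x⟫ = ⟪y, Q x⟫)
    (lam : ℂ) (hlam : lam ≠ 0) (u : V) (ω : W) :
    ((∀ v : V, ⟪Dl v, R (Dl u)⟫ =
        -lam * ⟪Dl v, R (J u)⟫ - lam * ⟪Q (J v), Dl u⟫ - lam * ⟪J v, Q ω⟫) ∧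
      (∀ z : W, ⟪z, ω⟫ = lam * ⟪z, J u⟫))
    ↔
    (ω = lam • J u ∧
      ∀ v : V, ⟪Dl v + conj lam • N (J v), R (Dl u + lam • J u)⟫ = 0) := by
  have expand : ∀ v : V, ⟪Dl v + conj lam • N (J v), R (Dl u + lam • J u)⟫ =
      ⟪Dl v, R (Dl u)⟫ + lam * ⟪Dl v, R (J u)⟫ + lam * ⟪Q (J v), Dl u⟫
        + lam * lam * ⟪J v, Q (J u)⟫ := by
    intro v
    rw [map_add, inner_add_left, inner_add_right, inner_add_right, inner_smul_left,
      inner_smul_left, map_smul, inner_smul_right, inner_smul_right,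
      hRN (Dl u) (J v), hRN' (J u) (J v), Complex.conj_conj]
    ring
  constructor
  · rintro ⟨h1, h2⟩
    have hω : ω = lam • J u := by
      refine ext_inner_left ℂ fun z => ?_
      rw [h2 z, inner_smul_right]
    refine ⟨hω, fun v => ?_⟩
    have h1v := h1 v
    rw [hω, map_smul, inner_smul_right] at h1v
    rw [expand v, h1v]
    ring
  · rintro ⟨hω, h⟩
    refine ⟨fun v => ?_, fun z => ?_⟩
    · have hv := h v
      rw [expand v] at hv
      rw [hω, map_smul, inner_smul_right]
      linear_combination hv
    · rw [hω, inner_smul_right]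
end

section
/- Suppose n ∈ L^∞(D), n ≥ 1 + δ. Define T : H → H on H = H₀²(D) × L²(D) by A(T(f,g),(v,z)) = B((f,g),(v,z)) for all (v,z) ∈ H, where A((u,ω),(v,z)) = ((n−1)⁻¹Δu, Δv)₀ + (ω,z)₀ and B is as in the linearized transmission eigenvalue problem. Then T is a compact operator on H. -/
/-!
Testing the defining identity with `v = 0` shows `(T (f, g)).2 = J f`; testing it with
`v = (T (f, g)).1`, `z = 0` and using the coercivity of `R` and the lower bound for `Dl` gives
`‖T (f, g)‖ ≲ ‖J f‖ + ‖J† (Q (Dl f + g))‖`. Here `‖J† w‖` is the norm of `w` in the dual of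
`H₀²(D)`, which can take the place of the `H⁻¹(D)` norm: `J†` is compact because
`‖J† w‖² ≤ ‖w‖ ‖J (J† w)‖`. So `T` is dominated by a compact operator, hence compact.
-/

open scoped ComplexInnerProductSpace InnerProduct

open Metric in
theorem isCompactOperator_of_sq_norm_le {𝕜 E F G : Type*} [NontriviallyNormedField 𝕜]
    [SeminormedAddCommGroup E] [NormedSpace 𝕜 E]
    [NormedAddCommGroup F] [NormedSpace 𝕜 F] [CompleteSpace F]
    [SeminormedAddCommGroup G] [NormedSpace 𝕜 G]
    {T : E →ₗ[𝕜] F} {K : E →ₗ[𝕜] G} (hK : IsCompactOperator K) (C : ℝ)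
    (h : ∀ x, ‖T x‖ ^ 2 ≤ C * ‖x‖ * ‖K x‖) : IsCompactOperator T := by
  rw [isCompactOperator_iff_isCompact_closure_image_ball T one_pos]
  refine (totallyBounded_closure.2 ?_).isCompact_of_isClosed isClosed_closure
  rw [Metric.totallyBounded_iff]
  intro ε hε
  obtain ⟨Kball, hKball, hKs⟩ := hK.image_ball_subset_compact 1
  set δ := ε ^ 2 / (2 * |C| + 1)
  obtain ⟨t, htK, htf, hcover⟩ := finite_approx_of_totallyBounded
    (hKball.totallyBounded.subset hKs) δ (by positivity)
  obtain ⟨s, hs, hsf, rfl⟩ : ∃ s ⊆ ball 0 1, s.Finite ∧ t = K '' s :=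
    Set.exists_subset_image_finite_and.1 ⟨t, htK, htf, rfl⟩
  refine ⟨T '' s, hsf.image _, ?_⟩
  rintro _ ⟨x, hx, rfl⟩
  obtain ⟨_, ⟨y, hy, rfl⟩, hxy⟩ := Set.mem_iUnion₂.1 (hcover ⟨x, hx, rfl⟩)
  refine Set.mem_biUnion ⟨y, hy, rfl⟩ ?_
  rw [mem_ball, dist_eq_norm, ← map_sub] at hxy ⊢
  have hdist : ‖x - y‖ ≤ 2 :=
    (norm_sub_le x y).trans (by linarith [mem_ball_zero_iff.1 hx, mem_ball_zero_iff.1 (hs hy)])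
  refine lt_of_pow_lt_pow_left₀ 2 hε.le ?_
  calc ‖T (x - y)‖ ^ 2 ≤ |C| * ‖x - y‖ * ‖K (x - y)‖ := by
        refine (h _).trans ?_
        gcongr
        exact le_abs_self C
    _ ≤ |C| * 2 * δ := by gcongr
    _ < ε ^ 2 := by
        rw [mul_div_assoc', div_lt_iff₀ (by positivity)]
        nlinarith [abs_nonneg C, pow_pos hε 2]

theorem isCompactOperator_of_norm_le {𝕜 E F G : Type*} [NontriviallyNormedField 𝕜]
    [SeminormedAddCommGroup E] [NormedSpace 𝕜 E]
    [NormedAddCommGroup F] [NormedSpace 𝕜 F] [CompleteSpace F]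
    [SeminormedAddCommGroup G] [NormedSpace 𝕜 G]
    {T : E →ₗ[𝕜] F} {K : E →L[𝕜] G} (hK : IsCompactOperator K) (C : ℝ)
    (h : ∀ x, ‖T x‖ ≤ C * ‖K x‖) : IsCompactOperator T :=
  isCompactOperator_of_sq_norm_le (K := K.toLinearMap) hK (C ^ 2 * ‖K‖) fun x =>
    calc ‖T x‖ ^ 2 ≤ (C * ‖K x‖) ^ 2 := pow_le_pow_left₀ (norm_nonneg _) (h x) 2
      _ = C ^ 2 * ‖K x‖ * ‖K x‖ := by ring
      _ ≤ C ^ 2 * (‖K‖ * ‖x‖) * ‖K x‖ := by gcongr; exact K.le_opNorm x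
      _ = C ^ 2 * ‖K‖ * ‖x‖ * ‖K x‖ := by ring

theorem IsCompactOperator.adjoint {𝕜 E F : Type*} [RCLike 𝕜]
    [NormedAddCommGroup E] [InnerProductSpace 𝕜 E] [CompleteSpace E]
    [NormedAddCommGroup F] [InnerProductSpace 𝕜 F] [CompleteSpace F]
    {A : E →L[𝕜] F} (hA : IsCompactOperator A) :
    IsCompactOperator (A†) := by
  refine isCompactOperator_of_sq_norm_le (K := (A ∘L A†).toLinearMap) (hA.comp_clm _) 1
    fun y => ?_
  calc ‖(A†) y‖ ^ 2 = RCLike.re (inner 𝕜 y (A ((A†) y))) := by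
        rw [← ContinuousLinearMap.adjoint_inner_left, inner_self_eq_norm_sq]
    _ ≤ ‖y‖ * ‖A ((A†) y)‖ :=
        (RCLike.re_le_norm _).trans (norm_inner_le_norm _ _)
    _ = _ := by simp

theorem IsCompactOperator.prodMk {M₁ M₂ M₃ : Type*} [Zero M₁] [TopologicalSpace M₁]
    [TopologicalSpace M₂] [TopologicalSpace M₃] {f : M₁ → M₂} {g : M₁ → M₃}
    (hf : IsCompactOperator f) (hg : IsCompactOperator g) :
    IsCompactOperator fun x => (f x, g x) := by
  obtain ⟨Kf, hKf, hf0⟩ := hf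
  obtain ⟨Kg, hKg, hg0⟩ := hg
  exact ⟨Kf ×ˢ Kg, hKf.prod hKg, by rw [Set.mk_preimage_prod]; exact Filter.inter_mem hf0 hg0⟩

theorem mul_le_of_mul_sq_le {a d b : ℝ} (hd : 0 ≤ d) (hb : 0 ≤ b) (h : a * d ^ 2 ≤ d * b) :
    a * d ≤ b := by
  rcases hd.eq_or_lt with rfl | hd
  · simpa using hb
  · nlinarith

theorem norm_le_of_energy_identity {V W : Type*}
    [NormedAddCommGroup V] [InnerProductSpace ℂ V] [CompleteSpace V]
    [NormedAddCommGroup W] [InnerProductSpace ℂ W] [CompleteSpace W]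
    {J Dl : V →L[ℂ] W} {R Q : W →L[ℂ] W} {a cD : ℝ} (ha : 0 < a) (hcD : 0 < cD)
    (hRcoer : ∀ w : W, a * ‖w‖ ^ 2 ≤ (⟪w, R w⟫ : ℂ).re)
    (hDlow : ∀ u : V, cD * ‖u‖ ≤ ‖Dl u‖)
    (hQsym : ∀ x y : W, ⟪Q y, x⟫ = ⟪y, Q x⟫) {u f : V} {g : W}
    (hu : ⟪Dl u, R (Dl u)⟫ = -⟪Dl u, R (J f)⟫ - ⟪Q (J u), Dl f⟫ - ⟪J u, Q g⟫) :
    ‖u‖ ≤ (‖R‖ + cD⁻¹) / (a * cD) * ‖(J f, (J†) (Q (Dl f + g)))‖ := by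
  set N := ‖(J f, (J†) (Q (Dl f + g)))‖
  set d := ‖Dl u‖
  have hu' : ⟪Dl u, R (Dl u)⟫ = -(⟪Dl u, R (J f)⟫ + ⟪u, (J†) (Q (Dl f + g))⟫) := by
    rw [hu, ContinuousLinearMap.adjoint_inner_right, map_add, inner_add_right, hQsym]
    ring
  have hud : ‖u‖ ≤ d / cD := (le_div_iff₀ hcD).2 (by linarith [hDlow u])
  have energy : a * d ^ 2 ≤ d * ((‖R‖ + cD⁻¹) * N) :=
    calc a * d ^ 2 ≤ (⟪Dl u, R (Dl u)⟫ : ℂ).re := hRcoer _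
      _ ≤ ‖⟪Dl u, R (J f)⟫ + ⟪u, (J†) (Q (Dl f + g))⟫‖ := by
        rw [hu', ← norm_neg]
        exact Complex.re_le_norm _
      _ ≤ d * (‖R‖ * ‖J f‖) + ‖u‖ * ‖(J†) (Q (Dl f + g))‖ :=
        (norm_add_le _ _).trans <| add_le_add
          ((norm_inner_le_norm (Dl u) (R (J f))).trans
            (mul_le_mul_of_nonneg_left (R.le_opNorm _) (norm_nonneg _)))
          (norm_inner_le_norm _ _)
      _ ≤ d * (‖R‖ * N) + d / cD * N := by
        gcongr
        exacts [norm_fst_le (J f, _), norm_snd_le (J f, _)]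
      _ = d * ((‖R‖ + cD⁻¹) * N) := by ring
  calc ‖u‖ ≤ d / cD := hud
    _ = a * d / (a * cD) := by field_simp
    _ ≤ (‖R‖ + cD⁻¹) * N / (a * cD) := by
        gcongr ?_ / _
        exact mul_le_of_mul_sq_le (norm_nonneg _) (by positivity) energy
    _ = (‖R‖ + cD⁻¹) / (a * cD) * N := by ring

theorem stmt13_general {V W : Type*}
    [NormedAddCommGroup V] [InnerProductSpace ℂ V] [CompleteSpace V]
    [NormedAddCommGroup W] [InnerProductSpace ℂ W] [CompleteSpace W]
    (J Dl : V →L[ℂ] W) (R Q : W →L[ℂ] W)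
    (a cD : ℝ) (ha : 0 < a) (hcD : 0 < cD)
    (hRcoer : ∀ w : W, a * ‖w‖ ^ 2 ≤ (⟪w, R w⟫ : ℂ).re)
    (hDlow : ∀ u : V, cD * ‖u‖ ≤ ‖Dl u‖)
    (hQsym : ∀ x y : W, ⟪Q y, x⟫ = ⟪y, Q x⟫)
    (hJcompact : IsCompactOperator J)
    (T : V × W →L[ℂ] V × W)
    (hT : ∀ (f v : V) (g z : W),
      ⟪Dl v, R (Dl (T (f, g)).1)⟫ + ⟪z, (T (f, g)).2⟫ =
        -⟪Dl v, R (J f)⟫ - ⟪Q (J v), Dl f⟫ - ⟪J v, Q g⟫ + ⟪z, J f⟫) :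
    IsCompactOperator T := by
  open ContinuousLinearMap in
  set K : V × W →L[ℂ] W × V :=
    (J ∘L fst ℂ V W).prod (J† ∘L Q ∘L (Dl ∘L fst ℂ V W + snd ℂ V W))
  have hK : IsCompactOperator K := (hJcompact.comp_clm _).prodMk (hJcompact.adjoint.comp_clm _)
  refine isCompactOperator_of_norm_le (T := T.toLinearMap) hK
    (max 1 ((‖R‖ + cD⁻¹) / (a * cD))) fun ⟨f, g⟩ => ?_
  have hsnd : (T (f, g)).2 = J f := ext_inner_left ℂ fun z => by simpa using hT f 0 g z
  have hfst : ‖(T (f, g)).1‖ ≤ (‖R‖ + cD⁻¹) / (a * cD) * ‖K (f, g)‖ :=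
    norm_le_of_energy_identity (f := f) (g := g) ha hcD hRcoer hDlow hQsym
      (by simpa only [inner_zero_left, add_zero] using hT f (T (f, g)).1 g 0)
  have hJf : ‖J f‖ ≤ ‖K (f, g)‖ := norm_fst_le (K (f, g))
  show max ‖(T (f, g)).1‖ ‖(T (f, g)).2‖ ≤ _
  rw [hsnd]
  exact max_le (hfst.trans (by gcongr; exact le_max_right _ _))
    (hJf.trans (le_mul_of_one_le_left (norm_nonneg _) (le_max_left _ _)))

/-- The solution operator `T` of the linearized transmission eigenvalue problem, defined on
`H = H₀²(D) × L²(D)` by `A(T(f,g),(v,z)) = B((f,g),(v,z))`, is compact.  Abstractly: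
`V = H₀²(D)`, `V1 = H₀¹(D)`, `W = L²(D)`; `J : V → W` and `J1 : V1 → W` are the (compact)
embeddings, `J21 : V → V1` the intermediate embedding, `Dl` the Laplacian (yielding an
equivalent norm on `V`), `R` multiplication by `(n-1)⁻¹` (selfadjoint, coercive) and `Q`
multiplication by `n(n-1)⁻¹`. -/
theorem stmt13 {V V1 W : Type*}
    [NormedAddCommGroup V] [InnerProductSpace ℂ V] [CompleteSpace V]
    [NormedAddCommGroup V1] [InnerProductSpace ℂ V1] [CompleteSpace V1]
    [NormedAddCommGroup W] [InnerProductSpace ℂ W] [CompleteSpace W]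
    (J Dl : V →L[ℂ] W) (J21 : V →L[ℂ] V1) (J1 : V1 →L[ℂ] W) (R Q : W →L[ℂ] W)
    (hR : IsSelfAdjoint R)
    (a cD : ℝ) (ha : 0 < a) (hcD : 0 < cD)
    (hRcoer : ∀ w : W, a * ‖w‖ ^ 2 ≤ (⟪w, R w⟫ : ℂ).re)
    (hDlow : ∀ u : V, cD * ‖u‖ ≤ ‖Dl u‖)
    (hJfact : ∀ v : V, J1 (J21 v) = J v)
    (hJ21 : ∀ v : V, ‖J21 v‖ ≤ ‖v‖)
    (hJbd : ∀ v : V, ‖J v‖ ≤ ‖v‖)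
    (hQsym : ∀ x y : W, ⟪Q y, x⟫ = ⟪y, Q x⟫)
    (hJcompact : IsCompactOperator J)
    (hJ1compact : IsCompactOperator J1)
    (T : V × W →L[ℂ] V × W)
    (hT : ∀ (f v : V) (g z : W),
      ⟪Dl v, R (Dl (T (f, g)).1)⟫ + ⟪z, (T (f, g)).2⟫ =
        -⟪Dl v, R (J f)⟫ - ⟪Q (J v), Dl f⟫ - ⟪J v, Q g⟫ + ⟪z, J f⟫) :
    IsCompactOperator T :=
  stmt13_general J Dl R Q a cD ha hcD hRcoer hDlow hQsym hJcompact T hT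
end

section
/- Aubin–Nitsche duality estimate in abstract form: let a(·,·) be a symmetric continuous coercive bilinear form on a Hilbert space V₂ which is continuously embedded in a Hilbert space V₀, let V_h ⊂ V₂ be a subspace, and let P_h : V₂ → V_h be the a-orthogonal projection. Suppose for every ξ ∈ V₀ the dual problem a(v, φ_ξ) = (ξ, v)_{V₀} (∀ v ∈ V₂) has a solution φ_ξ with approximation property inf_{v∈V_h} ‖φ_ξ − v‖_{V₂} ≤ η(h) ‖ξ‖_{V₀}. Then for every u ∈ V₂, ‖u − P_h u‖_{V₀} ≤ C η(h) ‖u − P_h u‖_{V₂}. -/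
open scoped RealInnerProductSpace

/-- Abstract Aubin–Nitsche duality estimate: let `a` be a symmetric continuous coercive
bilinear form on a Hilbert space `V₂` continuously embedded (via `ι`) in a Hilbert space
`V₀`, `V_h ⊂ V₂` a subspace and `P` the Ritz (`a`-orthogonal) projection onto `V_h`.
If every dual problem `a(v, φ_ξ) = (ξ, ι v)_{V₀}` has a solution with
`inf_{v ∈ V_h} ‖φ_ξ - v‖ ≤ η ‖ξ‖`, then `‖ι(u - P u)‖_{V₀} ≤ C η ‖u - P u‖_{V₂}`. -/
theorem stmt15 {V₂ V₀ : Type*}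
    [NormedAddCommGroup V₂] [InnerProductSpace ℝ V₂] [CompleteSpace V₂]
    [NormedAddCommGroup V₀] [InnerProductSpace ℝ V₀] [CompleteSpace V₀]
    (ι : V₂ →L[ℝ] V₀)
    (a : V₂ → V₂ → ℝ)
    (haadd1 : ∀ x y z : V₂, a (x + y) z = a x z + a y z)
    (hasmul1 : ∀ (c : ℝ) (x y : V₂), a (c • x) y = c * a x y)
    (haadd2 : ∀ x y z : V₂, a x (y + z) = a x y + a x z)
    (hasmul2 : ∀ (c : ℝ) (x y : V₂), a x (c • y) = c * a x y)
    (hsymm : ∀ x y : V₂, a x y = a y x)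
    (Ma c : ℝ) (hc : 0 < c)
    (hbound : ∀ x y : V₂, |a x y| ≤ Ma * ‖x‖ * ‖y‖)
    (hcoer : ∀ x : V₂, c * ‖x‖ ^ 2 ≤ a x x)
    (Vh : Submodule ℝ V₂)
    (P : V₂ → V₂)
    (hPmem : ∀ u : V₂, P u ∈ Vh)
    (hGal : ∀ u : V₂, ∀ v ∈ Vh, a (u - P u) v = 0)
    (η : ℝ) (hη : 0 ≤ η)
    (hdual : ∀ ξ : V₀, ∃ φ : V₂,
      (∀ v : V₂, a v φ = ⟪ξ, ι v⟫) ∧ Metric.infDist φ (Vh : Set V₂) ≤ η * ‖ξ‖) :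
    ∃ C > (0 : ℝ), ∀ u : V₂, ‖ι u - ι (P u)‖ ≤ C * η * ‖u - P u‖ := by
  refine ⟨max Ma 1, lt_of_lt_of_le one_pos (le_max_right _ _), fun u => ?_⟩
  set e := u - P u with he
  have hιe : ι u - ι (P u) = ι e := by rw [he, map_sub]
  rw [hιe]
  set ξ := ι e with hξdef
  by_cases hξ : ξ = 0
  · rw [hξ, norm_zero]
    positivity
  · have hnξ : 0 < ‖ξ‖ := norm_pos_iff.mpr hξ
    have hne : e ≠ 0 := fun h => hξ (by rw [hξdef, h, map_zero])
    have hnepos : 0 < ‖e‖ := norm_pos_iff.mpr hne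
    have hMa : 0 < Ma := by
      have h1 := hcoer e
      have h2 := (le_abs_self _).trans (hbound e e)
      nlinarith [mul_pos hnepos hnepos, sq_abs ‖e‖]
    obtain ⟨φ, hφ1, hφ2⟩ := hdual ξ
    have hkey : a e φ = ‖ξ‖ ^ 2 := by
      rw [hφ1 e, ← hξdef, real_inner_self_eq_norm_sq]
    have hsub : ∀ v ∈ Vh, ‖ξ‖ ^ 2 ≤ Ma * ‖e‖ * ‖φ - v‖ := by
      intro v hv
      have : a e (φ - v) = ‖ξ‖ ^ 2 := by
        have : a e (φ - v) = a e φ + (-1 : ℝ) * a e v := by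
          rw [sub_eq_add_neg, haadd2, ← hasmul2]; simp
        rw [this, hGal u v hv, hkey]; ring
      calc ‖ξ‖ ^ 2 = a e (φ - v) := this.symm
        _ ≤ |a e (φ - v)| := le_abs_self _
        _ ≤ Ma * ‖e‖ * ‖φ - v‖ := hbound _ _
    have hinf : ‖ξ‖ ^ 2 / (Ma * ‖e‖) ≤ Metric.infDist φ (Vh : Set V₂) := by
      by_contra h
      push_neg at h
      obtain ⟨v, hv, hlt⟩ := (Metric.infDist_lt_iff ⟨0, Vh.zero_mem⟩).mp h
      rw [dist_eq_norm, lt_div_iff₀ (by positivity)] at hlt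
      have := hsub v hv
      nlinarith
    have hchain : ‖ξ‖ ^ 2 / (Ma * ‖e‖) ≤ η * ‖ξ‖ := hinf.trans hφ2
    have : ‖ξ‖ ^ 2 ≤ Ma * ‖e‖ * (η * ‖ξ‖) := by
      rw [div_le_iff₀ (by positivity : (0:ℝ) < Ma * ‖e‖)] at hchain
      nlinarith
    have hfin : ‖ξ‖ ≤ Ma * η * ‖e‖ := by nlinarith
    calc ‖ξ‖ ≤ Ma * η * ‖e‖ := hfin
      _ ≤ max Ma 1 * η * ‖e‖ := by
        have := le_max_left Ma 1
        nlinarith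
end

section
/- If λ^h, λ are scalars given by λ^h = A(x_h, y_h)/B(x_h, y_h) with (λ, u) a primal eigenpair and (λ*, u*) the dual eigenpair (λ = conj(λ*)), and if |B(x_h, y_h)| ≥ β > 0, then |λ^h − λ| ≤ β⁻¹(M_A + |λ| M_B) ‖x_h − u‖ ‖y_h − u*‖, where M_A, M_B are the continuity constants of the sesquilinear forms A and B. -/
open scoped ComplexConjugate

/-- Quantitative two-grid eigenvalue error estimate: if `λ^h = A(x_h, y_h)/B(x_h, y_h)`,
`(λ, u)` is a primal eigenpair, `(λ*, u*)` the dual eigenpair with `λ = conj λ*`, and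
`|B(x_h, y_h)| ≥ β > 0`, then
`|λ^h - λ| ≤ β⁻¹ (M_A + |λ| M_B) ‖x_h - u‖ ‖y_h - u*‖`. -/
theorem stmt16 {H : Type*} [NormedAddCommGroup H] [InnerProductSpace ℂ H]
    (A B : H → H → ℂ)
    (hAadd1 : ∀ x y z : H, A (x + y) z = A x z + A y z)
    (hAsmul1 : ∀ (a : ℂ) (x y : H), A (a • x) y = a * A x y)
    (hAadd2 : ∀ x y z : H, A x (y + z) = A x y + A x z)
    (hAsmul2 : ∀ (a : ℂ) (x y : H), A x (a • y) = conj a * A x y)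
    (hBadd1 : ∀ x y z : H, B (x + y) z = B x z + B y z)
    (hBsmul1 : ∀ (a : ℂ) (x y : H), B (a • x) y = a * B x y)
    (hBadd2 : ∀ x y z : H, B x (y + z) = B x y + B x z)
    (hBsmul2 : ∀ (a : ℂ) (x y : H), B x (a • y) = conj a * B x y)
    (MA MB : ℝ)
    (hMA : ∀ x y : H, ‖A x y‖ ≤ MA * ‖x‖ * ‖y‖)
    (hMB : ∀ x y : H, ‖B x y‖ ≤ MB * ‖x‖ * ‖y‖)
    (lam lamst : ℂ) (u ust : H)
    (hprimal : ∀ w : H, A u w = lam * B u w)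
    (hdual : ∀ w : H, A w ust = conj lamst * B w ust)
    (hconj : lam = conj lamst)
    (xh yh : H) (β : ℝ) (hβ : 0 < β) (hBlow : β ≤ ‖B xh yh‖) :
    ‖A xh yh / B xh yh - lam‖ ≤ β⁻¹ * (MA + ‖lam‖ * MB) * ‖xh - u‖ * ‖yh - ust‖ := by
  have hBne : B xh yh ≠ 0 := by
    intro h; rw [h, norm_zero] at hBlow; linarith
  have hAsub1 : ∀ x y z : H, A (x - y) z = A x z - A y z := by
    intro x y z
    have : x - y = x + (-1 : ℂ) • y := by simp [sub_eq_add_neg]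
    rw [this, hAadd1, hAsmul1]; ring
  have hAsub2 : ∀ x y z : H, A x (y - z) = A x y - A x z := by
    intro x y z
    have : y - z = y + (-1 : ℂ) • z := by simp [sub_eq_add_neg]
    rw [this, hAadd2, hAsmul2]; simp; ring
  have hBsub1 : ∀ x y z : H, B (x - y) z = B x z - B y z := by
    intro x y z
    have : x - y = x + (-1 : ℂ) • y := by simp [sub_eq_add_neg]
    rw [this, hBadd1, hBsmul1]; ring
  have hBsub2 : ∀ x y z : H, B x (y - z) = B x y - B x z := by
    intro x y z
    have : y - z = y + (-1 : ℂ) • z := by simp [sub_eq_add_neg]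
    rw [this, hBadd2, hBsmul2]; simp; ring
  have hdual' : ∀ w : H, A w ust = lam * B w ust := by
    intro w; rw [hdual, ← hconj]
  have key : A xh yh - lam * B xh yh
      = A (xh - u) (yh - ust) - lam * B (xh - u) (yh - ust) := by
    rw [hAsub1, hAsub2, hAsub2, hBsub1, hBsub2, hBsub2,
      hprimal, hprimal, hdual']
    ring
  have hquot : A xh yh / B xh yh - lam
      = (A (xh - u) (yh - ust) - lam * B (xh - u) (yh - ust)) / B xh yh := by
    rw [← key]; field_simp
  rw [hquot, norm_div]
  have hnum : ‖A (xh - u) (yh - ust) - lam * B (xh - u) (yh - ust)‖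
      ≤ (MA + ‖lam‖ * MB) * ‖xh - u‖ * ‖yh - ust‖ := by
    calc ‖A (xh - u) (yh - ust) - lam * B (xh - u) (yh - ust)‖
        ≤ ‖A (xh - u) (yh - ust)‖ + ‖lam * B (xh - u) (yh - ust)‖ := norm_sub_le _ _
      _ ≤ MA * ‖xh - u‖ * ‖yh - ust‖ + ‖lam‖ * (MB * ‖xh - u‖ * ‖yh - ust‖) := by
          rw [norm_mul]
          exact add_le_add (hMA _ _)
            (mul_le_mul_of_nonneg_left (hMB _ _) (norm_nonneg _))
      _ = (MA + ‖lam‖ * MB) * ‖xh - u‖ * ‖yh - ust‖ := by ring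
  have hnn : (0:ℝ) ≤ ‖A (xh - u) (yh - ust) - lam * B (xh - u) (yh - ust)‖ := norm_nonneg _
  calc ‖A (xh - u) (yh - ust) - lam * B (xh - u) (yh - ust)‖ / ‖B xh yh‖
      ≤ ((MA + ‖lam‖ * MB) * ‖xh - u‖ * ‖yh - ust‖) / β := by
        exact div_le_div₀ (hnn.trans hnum) hnum hβ hBlow
    _ = β⁻¹ * (MA + ‖lam‖ * MB) * ‖xh - u‖ * ‖yh - ust‖ := by
        field_simp
end
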